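/- arXiv:2305.07200 — 4 statements merged into one kernel-verified Lean document; each statement's English description precedes it below -/
import Mathlib

section
/- Let (G, <) be an ordered group and a, b, g, h ∈ G. If ¬(g ∼ h), a ≪ g and b ≪ h, then a·b ≪ g·h. -/
/-- The absolute value `|g| = max(g, g⁻¹)` in a linearly ordered group. -/
def gabs {G : Type*} [Group G] [LinearOrder G] (g : G) : G := max g g⁻¹

/-- `g` and `h` are Archimedean equivalent: `|g| < |h|^m` and `|h| < |g|^n`
for some positive integers `m, n`. -/
def ArchEquiv {G : Type*} [Group G] [LinearOrder G] (g h : G) : Prop :=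
  ∃ m n : ℕ, 0 < m ∧ 0 < n ∧ gabs g < gabs h ^ m ∧ gabs h < gabs g ^ n

/-- `g` is Archimedean less than `h`: `|g|^n < |h|` for every positive integer `n`. -/
def ArchLT {G : Type*} [Group G] [LinearOrder G] (g h : G) : Prop :=
  ∀ n : ℕ, 0 < n → gabs g ^ n < gabs h

/-!
Since `g ≁ h`, one of them, say `h`, has all its powers below `|g|`, and as `1 < |h|` this gives
`h ≪ g`; hence `a, b, h ≪ g`. The elements `≪ g` are closed under inverses and products,
because `|x y| ≤ max(|x|, |y|)²`. Finally `a b ≪ g h`: otherwise `|g h| ≤ |a b|ⁿ` would make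
`g h ≪ g`, and then `g = (g h) h⁻¹ ≪ g`, which is absurd.
-/

section

variable {G : Type*} [Group G] [LinearOrder G]

theorem gabs_eq_mabs (g : G) : gabs g = |g|ₘ := rfl

theorem pow_le_or_pow_le_of_not_archEquiv {g h : G} (hgh : ¬ ArchEquiv g h) :
    (∀ k : ℕ, 0 < k → gabs h ^ k ≤ gabs g) ∨ ∀ k : ℕ, 0 < k → gabs g ^ k ≤ gabs h := by
  by_contra! hlt
  obtain ⟨⟨n, hn, hgn⟩, ⟨m, hm, hhm⟩⟩ := hlt
  exact hgh ⟨n, m, hn, hm, hgn, hhm⟩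

theorem archLT_of_pow_le [MulLeftMono G] {g h : G} (hh : 1 < gabs h)
    (hhg : ∀ k : ℕ, 0 < k → gabs h ^ k ≤ gabs g) : ArchLT h g := fun n _ =>
  (pow_lt_pow_right' hh n.lt_succ_self).trans_le (hhg _ n.succ_pos)

theorem archLT_or_archLT_of_not_archEquiv [MulLeftMono G] {g h : G} (hgh : ¬ ArchEquiv g h)
    (hg : 1 < gabs g) (hh : 1 < gabs h) : ArchLT h g ∨ ArchLT g h :=
  (pow_le_or_pow_le_of_not_archEquiv hgh).imp (archLT_of_pow_le hh) (archLT_of_pow_le hg)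

theorem mabs_mul_le_max_sq [MulLeftMono G] [MulRightMono G] (u v : G) :
    |u * v|ₘ ≤ max |u|ₘ |v|ₘ ^ 2 := by
  rw [pow_two]
  refine mabs_le'.2 ⟨mul_le_mul' ?_ ?_, ?_⟩
  · exact (le_mabs_self u).trans (le_max_left _ _)
  · exact (le_mabs_self v).trans (le_max_right _ _)
  · rw [mul_inv_rev]
    exact mul_le_mul' ((inv_le_mabs v).trans (le_max_right _ _))
      ((inv_le_mabs u).trans (le_max_left _ _))

namespace ArchLT

variable {x y u g : G}

theorem gabs_lt (hxg : ArchLT x g) : gabs x < gabs g := by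
  simpa using hxg 1 one_pos

theorem irrefl (g : G) : ¬ ArchLT g g :=
  fun hgg => hgg.gabs_lt.false

theorem trans (hxy : ArchLT x y) (hyg : ArchLT y g) : ArchLT x g :=
  fun n hn => (hxy n hn).trans hyg.gabs_lt

theorem inv (hxg : ArchLT x g) : ArchLT x⁻¹ g := by
  simpa only [ArchLT, gabs_eq_mabs, mabs_inv] using hxg

variable [MulLeftMono G] [MulRightMono G]

theorem one_lt_gabs_right (hxg : ArchLT x g) : 1 < gabs g :=
  (one_le_mabs x).trans_lt hxg.gabs_lt

theorem of_gabs_le_pow {k : ℕ} (hxg : ArchLT x g) (hk : 0 < k) (hux : gabs u ≤ gabs x ^ k) :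
    ArchLT u g := fun n hn =>
  calc gabs u ^ n ≤ (gabs x ^ k) ^ n := pow_le_pow_left' hux n
    _ = gabs x ^ (k * n) := (pow_mul _ _ _).symm
    _ < gabs g := hxg _ (Nat.mul_pos hk hn)

theorem mul (hxg : ArchLT x g) (hyg : ArchLT y g) : ArchLT (x * y) g := by
  have hxy := mabs_mul_le_max_sq x y
  rcases max_choice |x|ₘ |y|ₘ with hmax | hmax <;> rw [hmax] at hxy
  · exact hxg.of_gabs_le_pow two_pos hxy
  · exact hyg.of_gabs_le_pow two_pos hxy

theorem mul_right (hxg : ArchLT x g) (hyg : ArchLT y g) : ArchLT x (g * y) := by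
  intro n hn
  by_contra! hle
  have hgy : ArchLT (g * y) g := hxg.of_gabs_le_pow hn hle
  exact irrefl g (by simpa using hgy.mul hyg.inv)

theorem mul_left (hxg : ArchLT x g) (hyg : ArchLT y g) : ArchLT x (y * g) := by
  intro n hn
  by_contra! hle
  have hyg' : ArchLT (y * g) g := hxg.of_gabs_le_pow hn hle
  exact irrefl g (by simpa using hyg.inv.mul hyg')

end ArchLT

end

/-- In an ordered group, if `¬(g ∼ h)`, `a ≪ g` and `b ≪ h`, then `a·b ≪ g·h`. -/
theorem archLT_mul_mul {G : Type*} [Group G] [LinearOrder G]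
    (hl : ∀ a b c : G, a < b → c * a < c * b)
    (hr : ∀ a b c : G, a < b → a * c < b * c)
    (a b g h : G) (hgh : ¬ ArchEquiv g h) (ha : ArchLT a g) (hb : ArchLT b h) :
    ArchLT (a * b) (g * h) := by
  have : MulLeftStrictMono G := ⟨fun c _ _ hxy => hl _ _ c hxy⟩
  have : MulRightStrictMono G := ⟨fun c _ _ hxy => hr _ _ c hxy⟩
  have := mulLeftMono_of_mulLeftStrictMono G
  have := mulRightMono_of_mulRightStrictMono G
  rcases archLT_or_archLT_of_not_archEquiv hgh ha.one_lt_gabs_right hb.one_lt_gabs_right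
    with hhg | hgh'
  · exact (ha.mul (hb.trans hhg)).mul_right hhg
  · exact ((ha.trans hgh').mul hb).mul_left hgh'
end

section
/- Let (G, <) be an ordered group, let x, y₁, y₂ ∈ G with y₁ ≠ 1, and let k₁, l₁, k₂, l₂ ∈ ℤ with k₁ ≠ l₁ and k₂ ≠ l₂. If x⁻¹·y₁^{k₁}·x = y₁^{l₁}, x⁻¹·y₂^{k₂}·x = y₂^{l₂}, and y₁ ∼ y₂, then k₁·l₂ = k₂·l₁. -/
/- Conjugation by `x` is an automorphism `φ` preserving the order. Passing from `yᵢ` to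
`aᵢ = |yᵢ| > 1`, the hypotheses become `φ (aᵢ ^ pᵢ) = aᵢ ^ qᵢ` with `pᵢ = |kᵢ|`, `qᵢ = |lᵢ|`, and
order preservation forces `sign kᵢ = sign lᵢ`. Iterating gives `φ^[N] (a ^ p ^ N) = a ^ q ^ N`;
applying `φ^[N]` to `a₁ ^ (p₁p₂)^N ≤ a₂ ^ (m (p₁p₂)^N)` and using `a₂ ≤ a₁ ^ n` yields
`(q₁p₂)^N ≤ nm (q₂p₁)^N` for every `N`, hence `q₁/p₁ ≤ q₂/p₂`. By symmetry the ratios agree. -/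

theorem MonoidHom.iterate_map_pow_pow {M : Type*} [Monoid M] (φ : M →* M) {a : M} {p q : ℕ}
    (h : φ (a ^ p) = a ^ q) (N : ℕ) : φ^[N] (a ^ p ^ N) = a ^ q ^ N := by
  induction N with
  | zero => simp
  | succ N ih =>
    rw [Function.iterate_succ_apply', pow_succ, pow_mul, iterate_map_pow, ih, pow_right_comm,
      map_pow, h, ← pow_mul, ← pow_succ']

theorem Nat.le_of_forall_pow_le_mul_pow {u v C : ℕ} (h : ∀ N, u ^ N ≤ C * v ^ N) : u ≤ v := by
  by_contra! hvu
  rcases Nat.eq_zero_or_pos v with rfl | hv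
  · exact absurd (h 1) (by simpa using hvu.ne')
  · have hv' : (0 : ℝ) < v := by exact_mod_cast hv
    obtain ⟨N, hN⟩ := pow_unbounded_of_one_lt (C : ℝ)
      (by rwa [one_lt_div hv', Nat.cast_lt] : (1 : ℝ) < u / v)
    rw [div_pow, lt_div_iff₀ (by positivity)] at hN
    exact hN.not_ge (by exact_mod_cast h N)

theorem Int.mul_eq_mul_of_sign_eq_of_natAbs {a b c d : ℤ} (hab : a.sign = b.sign)
    (hcd : c.sign = d.sign) (h : a.natAbs * d.natAbs = c.natAbs * b.natAbs) : a * d = c * b := by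
  have h' : (a.natAbs : ℤ) * d.natAbs = c.natAbs * b.natAbs := by exact_mod_cast h
  rw [← Int.sign_mul_natAbs a, ← Int.sign_mul_natAbs b, ← Int.sign_mul_natAbs c,
    ← Int.sign_mul_natAbs d, hab, hcd]
  linear_combination (b.sign * d.sign) * h'

section OrderedGroup

variable {G : Type*} [Group G]

theorem map_pow_natAbs_of_map_zpow (φ : G →* G) {a : G} {k l : ℤ} (h : φ (a ^ k) = a ^ l)
    (hkl : k.sign = l.sign) : φ (a ^ k.natAbs) = a ^ l.natAbs := by
  rcases le_or_gt 0 k with hk | hk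
  · have hl : 0 ≤ l := Int.sign_nonneg_iff.1 (hkl ▸ Int.sign_nonneg_iff.2 hk)
    rwa [← zpow_natCast, ← zpow_natCast, Int.natAbs_of_nonneg hk, Int.natAbs_of_nonneg hl]
  · have hl : l < 0 := Int.sign_eq_neg_one_iff_neg.1 (hkl ▸ Int.sign_eq_neg_one_of_neg hk)
    rw [← zpow_natCast, ← zpow_natCast, Int.ofNat_natAbs_of_nonpos hk.le,
      Int.ofNat_natAbs_of_nonpos hl.le, zpow_neg, zpow_neg, map_inv, h]

variable [LinearOrder G]

theorem ArchEquiv.symm {g h : G} (hgh : ArchEquiv g h) : ArchEquiv h g :=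
  let ⟨m, n, hm, hn, h₁, h₂⟩ := hgh
  ⟨n, m, hn, hm, h₂, h₁⟩

theorem map_gabs_zpow_of_map_zpow (φ : G →* G) {y : G} {k l : ℤ} (h : φ (y ^ k) = y ^ l) :
    φ (gabs y ^ k) = gabs y ^ l := by
  rcases max_choice y y⁻¹ with hy | hy <;> rw [gabs, hy]
  · exact h
  · rw [inv_zpow, inv_zpow, map_inv, h]

variable [MulLeftMono G]

theorem zpow_right_strictMono' {a : G} (ha : 1 < a) : StrictMono fun n : ℤ ↦ a ^ n :=
  strictMono_int_of_lt_succ fun n ↦ by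
    rw [zpow_add_one]
    exact lt_mul_of_one_lt_right' _ ha

theorem one_le_gabs (g : G) : 1 ≤ gabs g := by
  rcases le_total 1 g with hg | hg
  · exact le_max_of_le_left hg
  · exact le_max_of_le_right (one_le_inv'.2 hg)

theorem ArchEquiv.one_lt_gabs {g h : G} (hgh : ArchEquiv g h) : 1 < gabs g := by
  obtain ⟨-, n, -, -, -, hhg⟩ := hgh
  by_contra! hg
  exact ((one_le_gabs h).trans_lt hhg).not_ge (pow_le_one' hg n)

theorem sign_eq_sign_of_map_zpow {φ : G →* G} (hφ : StrictMono φ) {a : G} (ha : 1 < a)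
    {k l : ℤ} (h : φ (a ^ k) = a ^ l) : k.sign = l.sign := by
  have hψ : StrictMono fun n : ℤ ↦ φ (a ^ n) := hφ.comp (zpow_right_strictMono' ha)
  have h₀ : φ (a ^ (0 : ℤ)) = a ^ (0 : ℤ) := by simp
  have hpos : 0 < k ↔ 0 < l := by
    rw [← hψ.lt_iff_lt, ← (zpow_right_strictMono' ha).lt_iff_lt]
    simp only [h, h₀]
  have hneg : k < 0 ↔ l < 0 := by
    rw [← hψ.lt_iff_lt, ← (zpow_right_strictMono' ha).lt_iff_lt]
    simp only [h, h₀]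
  rcases lt_trichotomy k 0 with hk | rfl | hk
  · rw [Int.sign_eq_neg_one_of_neg hk, Int.sign_eq_neg_one_of_neg (hneg.1 hk)]
  · rw [(by omega : l = 0)]
  · rw [Int.sign_eq_one_of_pos hk, Int.sign_eq_one_of_pos (hpos.1 hk)]

variable [MulRightMono G]

theorem strictMono_mulAut_conj (x : G) : StrictMono (MulAut.conj x) := fun a b h ↦ by
  simpa only [MulAut.conj_apply] using mul_lt_mul_left (mul_lt_mul_right h _) _

theorem exponent_ratio_le_of_map_pow {φ : G →* G} (hφ : Monotone φ) {a b : G} (ha : 1 < a)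
    {m n : ℕ} (hab : a ≤ b ^ m) (hba : b ≤ a ^ n) {p q p' q' : ℕ} (hpa : φ (a ^ p) = a ^ q)
    (hpb : φ (b ^ p') = b ^ q') : q * p' ≤ q' * p := by
  refine Nat.le_of_forall_pow_le_mul_pow (C := n * m) fun N ↦ (pow_le_pow_iff_right' ha).1 ?_
  calc a ^ (q * p') ^ N = φ^[N] (a ^ (p * p') ^ N) := by
        rw [mul_pow, mul_pow, pow_mul a (p ^ N), iterate_map_pow, φ.iterate_map_pow_pow hpa,
          pow_mul]
    _ ≤ φ^[N] (b ^ (m * (p * p') ^ N)) := (hφ.iterate N) (by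
        rw [pow_mul]
        exact pow_le_pow_left' hab _)
    _ = b ^ (m * (q' * p) ^ N) := by
        rw [show m * (p * p') ^ N = p' ^ N * (m * p ^ N) by ring, pow_mul, iterate_map_pow,
          φ.iterate_map_pow_pow hpb, ← pow_mul]
        ring_nf
    _ ≤ a ^ (n * m * (q' * p) ^ N) := by
        rw [mul_assoc n, pow_mul a n]
        exact pow_le_pow_left' hba _

end OrderedGroup

theorem conj_zpow_archEquiv_general {G : Type*} [Group G] [LinearOrder G]
    (hl : ∀ a b c : G, a < b → c * a < c * b)
    (hr : ∀ a b c : G, a < b → a * c < b * c)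
    (x y₁ y₂ : G) (k₁ l₁ k₂ l₂ : ℤ)
    (hconj₁ : x⁻¹ * y₁ ^ k₁ * x = y₁ ^ l₁)
    (hconj₂ : x⁻¹ * y₂ ^ k₂ * x = y₂ ^ l₂)
    (hequiv : ArchEquiv y₁ y₂) :
    k₁ * l₂ = k₂ * l₁ := by
  have : MulLeftStrictMono G := ⟨fun c _ _ h ↦ hl _ _ c h⟩
  have : MulRightStrictMono G := ⟨fun c _ _ h ↦ hr _ _ c h⟩
  have := mulLeftMono_of_mulLeftStrictMono G
  have := mulRightMono_of_mulRightStrictMono G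
  set φ : G →* G := (MulAut.conj x⁻¹).toMonoidHom
  have hφ : StrictMono φ := strictMono_mulAut_conj x⁻¹
  have h₁ : φ (gabs y₁ ^ k₁) = gabs y₁ ^ l₁ :=
    map_gabs_zpow_of_map_zpow φ (by simpa [φ] using hconj₁)
  have h₂ : φ (gabs y₂ ^ k₂) = gabs y₂ ^ l₂ :=
    map_gabs_zpow_of_map_zpow φ (by simpa [φ] using hconj₂)
  have ha := hequiv.one_lt_gabs
  have hb := hequiv.symm.one_lt_gabs
  have hs₁ := sign_eq_sign_of_map_zpow hφ ha h₁
  have hs₂ := sign_eq_sign_of_map_zpow hφ hb h₂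
  have hn₁ := map_pow_natAbs_of_map_zpow φ h₁ hs₁
  have hn₂ := map_pow_natAbs_of_map_zpow φ h₂ hs₂
  obtain ⟨m, n, -, -, h₁₂, h₂₁⟩ := hequiv
  refine Int.mul_eq_mul_of_sign_eq_of_natAbs hs₁ hs₂ (le_antisymm ?_ ?_)
  · linarith [exponent_ratio_le_of_map_pow hφ.monotone hb h₂₁.le h₁₂.le hn₂ hn₁]
  · linarith [exponent_ratio_le_of_map_pow hφ.monotone ha h₁₂.le h₂₁.le hn₁ hn₂]

/-- In an ordered group, if `x⁻¹ y₁^{k₁} x = y₁^{l₁}` and `x⁻¹ y₂^{k₂} x = y₂^{l₂}`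
with `k₁ ≠ l₁`, `k₂ ≠ l₂`, `y₁ ≠ 1`, and `y₁ ∼ y₂`, then `k₁·l₂ = k₂·l₁`. -/
theorem conj_zpow_archEquiv {G : Type*} [Group G] [LinearOrder G]
    (hl : ∀ a b c : G, a < b → c * a < c * b)
    (hr : ∀ a b c : G, a < b → a * c < b * c)
    (x y₁ y₂ : G) (hy₁ : y₁ ≠ 1) (k₁ l₁ k₂ l₂ : ℤ)
    (hk₁l₁ : k₁ ≠ l₁) (hk₂l₂ : k₂ ≠ l₂)
    (hconj₁ : x⁻¹ * y₁ ^ k₁ * x = y₁ ^ l₁)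
    (hconj₂ : x⁻¹ * y₂ ^ k₂ * x = y₂ ^ l₂)
    (hequiv : ArchEquiv y₁ y₂) :
    k₁ * l₂ = k₂ * l₁ :=
  conj_zpow_archEquiv_general hl hr x y₁ y₂ k₁ l₁ k₂ l₂ hconj₁ hconj₂ hequiv
end

section
/- For any group G, the space of orders X(G), i.e., the set of all positive cones of G, is a closed subset of 2^G with the product topology; consequently X(G) is compact. -/
/-- `P` is a positive cone on the group `G`: `G = P ⊔ P⁻¹ ⊔ {1}`, `P·P ⊆ P`,
and `P` is invariant under conjugation. -/
def IsPositiveCone {G : Type*} [Group G] (P : Set G) : Prop :=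
  (∀ g : G, g ∈ P ∨ g⁻¹ ∈ P ∨ g = 1) ∧
  (∀ g : G, g ∈ P → g⁻¹ ∉ P) ∧
  (1 : G) ∉ P ∧
  (∀ a b : G, a ∈ P → b ∈ P → a * b ∈ P) ∧
  (∀ g a : G, a ∈ P → g * a * g⁻¹ ∈ P)

/-- The space of orders `X(G)` of `G`, as a subset of `2^G = G → Bool`
(with its product topology, `Bool` being discrete). -/
def SpaceOfOrders (G : Type*) [Group G] : Set (G → Bool) :=
  {P | IsPositiveCone {g : G | P g = true}}

/-! Each axiom of a positive cone, for fixed group elements, constrains at most three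
coordinates of `P ∈ 2^G`, so it cuts out a closed subset; `X(G)` is the intersection of
these, and `2^G` is compact by Tychonoff's theorem. -/

lemma isClopen_setOf_apply_eq_true {ι : Type*} (i : ι) :
    IsClopen {P : ι → Bool | P i = true} :=
  (isClopen_discrete {true}).preimage (continuous_apply i)

lemma isClosed_setOf_forall {X ι : Type*} [TopologicalSpace X] {p : ι → X → Prop}
    (h : ∀ i, IsClosed {x | p i x}) : IsClosed {x | ∀ i, p i x} := by
  simpa only [Set.ofPred_forall] using isClosed_iInter h

theorem isClosed_spaceOfOrders (G : Type*) [Group G] : IsClosed (SpaceOfOrders G) := by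
  have mem (g : G) := isClopen_setOf_apply_eq_true g
  refine .and (isClosed_setOf_forall fun g => ?total) <|
    .and (isClosed_setOf_forall fun g => ?asymm) <|
    .and (mem 1).isOpen.isClosed_compl <|
    .and (isClosed_setOf_forall fun a => isClosed_setOf_forall fun b => ?mul) <|
    isClosed_setOf_forall fun g => isClosed_setOf_forall fun a => ?conj
  case total => exact (mem g).isClosed.union ((mem g⁻¹).isClosed.union isClosed_const)
  case asymm => exact isClosed_imp (mem g).isOpen (mem g⁻¹).isOpen.isClosed_compl
  case mul => exact isClosed_imp (mem a).isOpen (isClosed_imp (mem b).isOpen (mem (a * b)).isClosed)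
  case conj => exact isClosed_imp (mem a).isOpen (mem (g * a * g⁻¹)).isClosed

/-- For any group `G`, the space of orders `X(G)` is a closed subset of `2^G`, and
consequently compact. -/
theorem spaceOfOrders_isClosed_isCompact (G : Type*) [Group G] :
    IsClosed (SpaceOfOrders G) ∧ IsCompact (SpaceOfOrders G) :=
  ⟨isClosed_spaceOfOrders G, (isClosed_spaceOfOrders G).isCompact⟩
end

section
/- Let p be a prime number. The family of real numbers (p^x), where x ranges over the dyadic rationals in the interval [0, 1) and p^x denotes the positive real power, is linearly independent over ℚ when ℝ is regarded as a ℚ-vector space. -/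
/-!
Finitely many dyadic rationals in `[0, 1)` share a denominator `2 ^ K`, so the corresponding
powers `p ^ x` are distinct powers `α ^ n`, `n < 2 ^ K`, of `α = p ^ (1 / 2 ^ K)`. By Eisenstein's
criterion `X ^ (2 ^ K) - p` is irreducible over `ℚ`, hence it is the minimal polynomial of `α`,
and powers of `α` below its degree are `ℚ`-linearly independent.
-/

open Polynomial

theorem Polynomial.isEisensteinAt_X_pow_sub_C {R : Type*} [CommRing R] [IsDomain R] {p : R}
    (hp : Prime p) {n : ℕ} (hn : n ≠ 0) :
    (X ^ n - C p : R[X]).IsEisensteinAt (Ideal.span {p}) := by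
  refine (monic_X_pow_sub_C p hn).isEisensteinAt_of_mem_of_notMem ?_ (fun hi => ?_) ?_
  · rw [Ne, Ideal.span_singleton_eq_top]
    exact hp.not_isUnit
  · rw [natDegree_X_pow_sub_C] at hi
    rw [coeff_sub, coeff_X_pow, if_neg hi.ne, coeff_C, zero_sub, neg_mem_iff]
    split_ifs
    · exact Ideal.mem_span_singleton_self p
    · exact Ideal.zero_mem _
  · rw [coeff_sub, coeff_X_pow, if_neg (Ne.symm hn), coeff_C_zero, zero_sub,
      Ideal.span_singleton_pow, Ideal.mem_span_singleton, dvd_neg]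
    intro h
    have := (pow_dvd_pow_iff hp.ne_zero hp.not_isUnit (n := 2) (m := 1)).1 (by rwa [pow_one])
    omega

theorem Polynomial.irreducible_X_pow_sub_C_algebraMap_of_prime {R K : Type*} [CommRing R]
    [IsDomain R] [IsIntegrallyClosed R] [Field K] [Algebra R K] [IsFractionRing R K] {p : R}
    (hp : Prime p) {n : ℕ} (hn : n ≠ 0) :
    Irreducible (X ^ n - C (algebraMap R K p)) := by
  have hmonic := monic_X_pow_sub_C p hn
  have hirr := (isEisensteinAt_X_pow_sub_C hp hn).irreducible
    ((Ideal.span_singleton_prime hp.ne_zero).2 hp) hmonic.isPrimitive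
    (by rw [natDegree_X_pow_sub_C]; omega)
  simpa using (hmonic.irreducible_iff_irreducible_map_fraction_map (K := K)).1 hirr

theorem linearIndependent_pow_of_pow_eq_prime {A : Type*} [Ring A] [Nontrivial A] [Algebra ℚ A]
    {p : ℕ} (hp : p.Prime) {n : ℕ} (hn : n ≠ 0) {α : A} (hα : α ^ n = p) :
    LinearIndependent ℚ fun i : Fin n => α ^ (i : ℕ) := by
  have hirr : Irreducible (X ^ n - C (p : ℚ)) := by
    simpa using irreducible_X_pow_sub_C_algebraMap_of_prime (K := ℚ)
      (Nat.prime_iff_prime_int.1 hp) hn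
  have hmin := minpoly.eq_of_irreducible_of_monic (x := α) hirr (by simp [hα])
    (monic_X_pow_sub_C _ hn)
  have := linearIndependent_pow (K := ℚ) α
  rwa [← hmin, natDegree_X_pow_sub_C] at this

theorem Nat.Prime.linearIndependent_rpow_div {p : ℕ} (hp : p.Prime) {n : ℕ} (hn : n ≠ 0) :
    LinearIndependent ℚ fun i : Fin n => (p : ℝ) ^ ((i : ℝ) / n) := by
  have hroot : ((p : ℝ) ^ (n : ℝ)⁻¹) ^ n = p := Real.rpow_inv_natCast_pow p.cast_nonneg hn
  have hpow (i : ℕ) : (p : ℝ) ^ ((i : ℝ) / n) = ((p : ℝ) ^ (n : ℝ)⁻¹) ^ i := by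
    rw [← Real.rpow_natCast, ← Real.rpow_mul p.cast_nonneg, inv_mul_eq_div]
  simp_rw [hpow]
  exact linearIndependent_pow_of_pow_eq_prime hp hn hroot

theorem exists_nat_div_two_pow_eq {x : ℝ} {m k : ℤ} (hx : x = m / 2 ^ k) (hx0 : 0 ≤ x) {K : ℕ}
    (hk : k ≤ K) : ∃ n : ℕ, x = n / 2 ^ K := by
  have hscaled : x * 2 ^ K = ((m * 2 ^ (K - k).toNat : ℤ) : ℝ) := by
    rw [hx]
    push_cast
    rw [← zpow_natCast (2 : ℝ) (K - k).toNat, Int.toNat_of_nonneg (by omega),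
      zpow_sub₀ two_ne_zero, zpow_natCast]
    ring
  have hscaled_nonneg : (0 : ℝ) ≤ ((m * 2 ^ (K - k).toNat : ℤ) : ℝ) := hscaled ▸ by positivity
  obtain ⟨n, hn⟩ := Int.eq_ofNat_of_zero_le (a := m * 2 ^ (K - k).toNat)
    (by exact_mod_cast hscaled_nonneg)
  refine ⟨n, ?_⟩
  rw [eq_div_iff (by positivity), hscaled, hn, Int.cast_natCast]

theorem Finset.exists_fin_two_pow_div_eq {ι : Type*} (s : Finset ι) {v : ι → ℝ}
    (hv : ∀ i ∈ s, (∃ m k : ℤ, v i = m / 2 ^ k) ∧ 0 ≤ v i ∧ v i < 1) :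
    ∃ K : ℕ, ∃ f : s → Fin (2 ^ K), ∀ i : s, v i = (f i : ℕ) / 2 ^ K := by
  choose! m k hmk using fun i hi => (hv i hi).1
  refine ⟨s.sup fun i => (k i).toNat, ?_⟩
  have hnum (i : s) : ∃ n : ℕ, v i = n / 2 ^ s.sup fun i => (k i).toNat :=
    exists_nat_div_two_pow_eq (hmk i i.2) (hv i i.2).2.1
      ((Int.self_le_toNat _).trans (by exact_mod_cast s.le_sup (f := fun i => (k i).toNat) i.2))
  choose n hn using hnum
  refine ⟨fun i => ⟨n i, ?_⟩, hn⟩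
  have := (hv i i.2).2.2
  rw [hn i, div_lt_one (by positivity)] at this
  exact_mod_cast this

/-- For a prime `p`, the family of real numbers `p^x`, where `x` ranges over the dyadic
rationals in `[0, 1)`, is linearly independent over `ℚ` (viewing `ℝ` as a `ℚ`-vector
space).  Here `p^x` is the positive real power `Real.rpow`. -/
theorem linearIndependent_prime_rpow_dyadic (p : ℕ) (hp : p.Prime) :
    LinearIndependent ℚ
      (fun x : {x : ℝ // (∃ m k : ℤ, x = (m : ℝ) / 2 ^ k) ∧ 0 ≤ x ∧ x < 1} =>
        (p : ℝ) ^ (x : ℝ)) := by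
  rw [linearIndependent_iff_finset_linearIndependent]
  intro s
  obtain ⟨K, f, hf⟩ := s.exists_fin_two_pow_div_eq (v := Subtype.val) fun x _ => x.2
  have hf_inj : Function.Injective f := fun x y hxy =>
    Subtype.val_injective <| Subtype.val_injective <| by rw [hf x, hf y, hxy]
  convert (hp.linearIndependent_rpow_div (pow_ne_zero K two_ne_zero)).comp f hf_inj using 1
  funext x
  simp [hf x]
end
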